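/- arXiv:2004.07319 — 3 statements merged into one kernel-verified Lean document; each statement's English description precedes it below -/
import Mathlib

section
/- In the worst case, the order-4 Voronoi diagram of n unweighted sites in 3-dimensional Euclidean space has Ω(n²) non-empty regions; i.e., for infinitely many n there exist n sites in ℝ³ whose order-4 Voronoi diagram (with the Euclidean metric and all weights equal) has Ω(n²) non-empty regions. -/
/-! Auxiliary construction: `2*m` sites on two skew lines in `ℝ³`:
line 1 consists of `(k, 0, 0)` for `k < m`, line 2 of `(0, k, 1)` for `k < m`.
For every pair of consecutive indices `(i,i+1)` on line 1 and `(j,j+1)` on line 2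
there is a point whose four nearest sites are exactly those, giving `(m-1)²`
nonempty order-4 Voronoi regions. -/

noncomputable def pt3 (a b c : ℝ) : EuclideanSpace ℝ (Fin 3) :=
  (WithLp.equiv 2 (Fin 3 → ℝ)).symm ![a, b, c]

lemma dist_pt3 (a b c d e f : ℝ) :
    dist (pt3 a b c) (pt3 d e f) = Real.sqrt ((a-d)^2+(b-e)^2+(c-f)^2) := by
  rw [EuclideanSpace.dist_eq]
  simp [pt3, Fin.sum_univ_three, Real.dist_eq, sq_abs]

noncomputable def vsites (m : ℕ) : Fin (2*m) → EuclideanSpace ℝ (Fin 3) :=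
  fun k => if (k:ℕ) < m then pt3 (k:ℝ) 0 0 else pt3 0 (((k:ℕ) - m : ℕ) : ℝ) 1

/-- Witness point: for sites `i, i+1` on line 1 and `m+j, m+j+1` on line 2,
there is a point strictly closer to these four sites than to all other sites. -/
lemma voronoi_witness (m i j : ℕ) (hi : i + 1 < m) (hj : j + 1 < m) :
    ∃ x : EuclideanSpace ℝ (Fin 3),
      ∀ k : Fin (2*m), ((k:ℕ) = i ∨ (k:ℕ) = i+1 ∨ (k:ℕ) = m+j ∨ (k:ℕ) = m+j+1) →
      ∀ l : Fin (2*m), ¬((l:ℕ) = i ∨ (l:ℕ) = i+1 ∨ (l:ℕ) = m+j ∨ (l:ℕ) = m+j+1) →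
        dist (vsites m k) x < dist (vsites m l) x := by
  set u : ℝ := (i:ℝ) + 1/2 with hu
  set v : ℝ := (j:ℝ) + 1/2 with hv
  set w : ℝ := (u^2 + 1 - v^2)/2 with hw
  refine ⟨pt3 u v w, ?_⟩
  have key : ∀ k : Fin (2*m),
      dist (vsites m k) (pt3 u v w)
        = Real.sqrt ((if (k:ℕ) < m then ((k:ℕ) - u)^2 else (((k:ℕ) - m : ℕ) - v)^2)
            + (v^2 + w^2)) := by
    intro k
    by_cases hk : (k:ℕ) < m
    · simp only [vsites, if_pos hk, dist_pt3]
      ring_nf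
    · simp only [vsites, if_neg hk, dist_pt3]
      congr 1
      have : u^2 + (1 - w)^2 = v^2 + w^2 := by rw [hw]; ring
      nlinarith [this]
  intro k hk l hl
  rw [key k, key l]
  apply Real.sqrt_lt_sqrt
  · positivity
  have hkval : (if (k:ℕ) < m then ((k:ℕ) - u)^2 else (((k:ℕ) - m : ℕ) - v)^2) = 1/4 := by
    rcases hk with h | h | h | h
    · rw [if_pos (by omega), h]; rw [hu]; ring
    · rw [if_pos (by omega), h]; push_cast; rw [hu]; ring
    · rw [if_neg (by omega)]
      have : ((k:ℕ) - m : ℕ) = j := by omega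
      rw [this, hv]; ring
    · rw [if_neg (by omega)]
      have : ((k:ℕ) - m : ℕ) = j + 1 := by omega
      rw [this]; push_cast; rw [hv]; ring
  rw [hkval]
  push_neg at hl
  obtain ⟨h1, h2, h3, h4⟩ := hl
  have hlval : 9/4 ≤ (if (l:ℕ) < m then ((l:ℕ) - u)^2 else (((l:ℕ) - m : ℕ) - v)^2) := by
    by_cases hlm : (l:ℕ) < m
    · rw [if_pos hlm]
      have : (l:ℕ) + 1 ≤ i ∨ i + 2 ≤ (l:ℕ) := by omega
      rcases this with h | h
      · have : ((l:ℕ):ℝ) + 1 ≤ (i:ℝ) := by exact_mod_cast h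
        rw [hu]; nlinarith
      · have : (i:ℝ) + 2 ≤ ((l:ℕ):ℝ) := by exact_mod_cast h
        rw [hu]; nlinarith
    · rw [if_neg hlm]
      set l' : ℕ := (l:ℕ) - m with hl'
      have : l' + 1 ≤ j ∨ j + 2 ≤ l' := by omega
      rcases this with h | h
      · have : (l':ℝ) + 1 ≤ (j:ℝ) := by exact_mod_cast h
        rw [hv]; nlinarith
      · have : (j:ℝ) + 2 ≤ (l':ℝ) := by exact_mod_cast h
        rw [hv]; nlinarith
  linarith

/-- The four-element set of site indices for pair `(i,j)`. -/
def vset (m : ℕ) (i j : Fin (m-1)) : Finset (Fin (2*m)) :=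
  { ⟨(i:ℕ), by omega⟩, ⟨(i:ℕ)+1, by omega⟩,
    ⟨m+(j:ℕ), by omega⟩, ⟨m+(j:ℕ)+1, by omega⟩ }

lemma mem_vset (m : ℕ) (i j : Fin (m-1)) (k : Fin (2*m)) :
    k ∈ vset m i j ↔ ((k:ℕ) = i ∨ (k:ℕ) = (i:ℕ)+1 ∨ (k:ℕ) = m+j ∨ (k:ℕ) = m+(j:ℕ)+1) := by
  simp [vset, Finset.mem_insert, Fin.ext_iff]

lemma card_vset (m : ℕ) (i j : Fin (m-1)) : (vset m i j).card = 4 := by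
  have hi := i.isLt
  have hj := j.isLt
  rw [vset]
  rw [Finset.card_insert_of_notMem
        (by simp only [Finset.mem_insert, Finset.mem_singleton, Fin.mk.injEq]; omega),
      Finset.card_insert_of_notMem
        (by simp only [Finset.mem_insert, Finset.mem_singleton, Fin.mk.injEq]; omega),
      Finset.card_insert_of_notMem
        (by simp only [Finset.mem_insert, Finset.mem_singleton, Fin.mk.injEq]; omega),
      Finset.card_singleton]

lemma vset_inj (m : ℕ) :
    Function.Injective (fun p : Fin (m-1) × Fin (m-1) => vset m p.1 p.2) := by
  rintro ⟨i, j⟩ ⟨i', j'⟩ h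
  simp only at h
  have hi := i.isLt; have hj := j.isLt; have hi' := i'.isLt; have hj' := j'.isLt
  have h1 : (⟨(i:ℕ), by omega⟩ : Fin (2*m)) ∈ vset m i' j' := by
    rw [← h, mem_vset]; left; rfl
  have h2 : (⟨(i':ℕ), by omega⟩ : Fin (2*m)) ∈ vset m i j := by
    rw [h, mem_vset]; left; rfl
  have h3 : (⟨m+(j:ℕ), by omega⟩ : Fin (2*m)) ∈ vset m i' j' := by
    rw [← h, mem_vset]; right; right; left; rfl
  have h4 : (⟨m+(j':ℕ), by omega⟩ : Fin (2*m)) ∈ vset m i j := by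
    rw [h, mem_vset]; right; right; left; rfl
  rw [mem_vset] at h1 h2 h3 h4
  simp only at h1 h2 h3 h4
  have : (i:ℕ) = i' ∧ (j:ℕ) = j' := by omega
  ext
  · exact this.1
  · exact this.2

/-- **Worst-case lower bound for order-4 Voronoi diagrams in ℝ³ (Corollary 6.3).**
In the worst case the order-`4` Voronoi diagram of `n` unweighted sites in
`3`-dimensional Euclidean space has `Ω(n²)` non-empty regions: there is a constant
`c > 0` such that for infinitely many `n` there are `n` sites in `ℝ³` whose order-`4`
Voronoi diagram (Euclidean metric, all weights equal) has at least `c·n²` non-empty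
regions. -/
theorem order_four_voronoi_quadratic_lower_bound :
    ∃ c > (0 : ℝ), ∀ N : ℕ, ∃ n : ℕ, N ≤ n ∧
      ∃ s : Fin n → EuclideanSpace ℝ (Fin 3),
        c * (n : ℝ) ^ 2 ≤
          ({A : Finset (Fin n) | A.card = 4 ∧
              ∃ x : EuclideanSpace ℝ (Fin 3),
                ∀ i ∈ A, ∀ j ∉ A, dist (s i) x < dist (s j) x}.ncard : ℝ) := by
  refine ⟨1/16, by norm_num, fun N => ?_⟩
  set m : ℕ := max N 2 with hmdef
  have hNm : N ≤ m := le_max_left N 2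
  have hm2 : 2 ≤ m := le_max_right N 2
  refine ⟨2*m, by omega, vsites m, ?_⟩
  set S : Set (Finset (Fin (2*m))) :=
    {A : Finset (Fin (2*m)) | A.card = 4 ∧
      ∃ x : EuclideanSpace ℝ (Fin 3),
        ∀ i ∈ A, ∀ j ∉ A, dist (vsites m i) x < dist (vsites m j) x} with hS
  set T : Finset (Finset (Fin (2*m))) :=
    Finset.image (fun p : Fin (m-1) × Fin (m-1) => vset m p.1 p.2) Finset.univ with hT
  have hTcard : T.card = (m-1) * (m-1) := by
    rw [hT, Finset.card_image_of_injective _ (vset_inj m), Finset.card_univ,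
      Fintype.card_prod, Fintype.card_fin]
  have hsub : (↑T : Set (Finset (Fin (2*m)))) ⊆ S := by
    intro A hA
    rw [Finset.coe_image] at hA
    obtain ⟨⟨i, j⟩, -, rfl⟩ := hA
    have hi := i.isLt
    have hj := j.isLt
    refine ⟨card_vset m i j, ?_⟩
    obtain ⟨x, hx⟩ := voronoi_witness m i j (by omega) (by omega)
    refine ⟨x, fun k hk l hl => ?_⟩
    exact hx k ((mem_vset m i j k).mp hk) l (fun hc => hl ((mem_vset m i j l).mpr hc))
  have hcount : (m-1) * (m-1) ≤ S.ncard := by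
    calc (m-1) * (m-1) = T.card := hTcard.symm
    _ = (↑T : Set (Finset (Fin (2*m)))).ncard := (Set.ncard_coe_finset T).symm
    _ ≤ S.ncard := Set.ncard_le_ncard hsub (Set.toFinite S)
  have hc : ((m-1) * (m-1) : ℕ) ≤ (S.ncard : ℝ) := by exact_mod_cast hcount
  refine le_trans ?_ hc
  have hm1 : (1:ℕ) ≤ m := by omega
  have hmr : (2:ℝ) ≤ (m:ℝ) := by exact_mod_cast hm2
  push_cast [Nat.cast_sub hm1]
  nlinarith
end

section
/- In the worst case, the order-3 Voronoi diagram of n multiplicatively weighted sites in 2-dimensional Euclidean space has Ω(n²) non-empty regions; i.e., for infinitely many n there exist n sites in ℝ² with positive multiplicative weights whose weighted order-3 Voronoi diagram has Ω(n²) non-empty regions. -/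
/-!
Put `m` heavy sites of weight `1` at `(0, j)` and `m` light sites, each taken twice, at
`(3m⁴ + i m, -1)` with normalized weight `m / (3m⁴ + i m)`. For every pair `(i, j)` the point
`x = (3m⁴ + i m, j)` with scale `r = 3m⁴ + i m` separates heavy site `j` and both copies of light
site `i` from all other sites: heavy site `j` is at distance exactly `r`, the other heavy sites are
strictly farther because they sit at other heights, the light site `i` is at distance
`j + 1 ≤ m = ω_i r`, and a light site `k ≠ i` has `ω_k r < m + 1/(3m) < √(m² + 1)`, which is less
than its distance from `x`. So `3m` sites have at least `m²` non-empty order-3 regions.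
-/

open Finset

section Regions

variable {ι κ P : Type*} [Dist P]

def WeightedRegionNonempty (s : ι → P) (ω : ι → ℝ) (A : Finset ι) : Prop :=
  ∃ (x : P) (r : ℝ),
    (∀ i ∈ A, dist (s i) x ≤ ω i * r) ∧ ∀ i ∉ A, ω i * r < dist (s i) x

def nonemptyOrderRegions (k : ℕ) (s : ι → P) (ω : ι → ℝ) : Set (Finset ι) :=
  {A | A.card = k ∧ WeightedRegionNonempty s ω A}

theorem WeightedRegionNonempty.map_equiv {s : ι → P} {ω : ι → ℝ} {A : Finset ι}
    (h : WeightedRegionNonempty s ω A) (e : ι ≃ κ) :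
    WeightedRegionNonempty (s ∘ e.symm) (ω ∘ e.symm) (A.map e.toEmbedding) := by
  obtain ⟨x, r, hin, hout⟩ := h
  exact ⟨x, r, fun t ht => hin _ (by simpa [mem_map_equiv] using ht),
    fun t ht => hout _ (by simpa [mem_map_equiv] using ht)⟩

theorem ncard_nonemptyOrderRegions_le_comp_equiv [Finite κ] (k : ℕ) (s : ι → P)
    (ω : ι → ℝ) (e : ι ≃ κ) :
    (nonemptyOrderRegions k s ω).ncard ≤
      (nonemptyOrderRegions k (s ∘ e.symm) (ω ∘ e.symm)).ncard :=
  Set.ncard_le_ncard_of_injOn (Finset.map e.toEmbedding)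
    (fun _ ⟨hcard, hA⟩ => ⟨(card_map _).trans hcard, hA.map_equiv e⟩)
    (Finset.map_injective _).injOn (Set.toFinite _)

end Regions

theorem EuclideanSpace.dist_vec2 (a b c d : ℝ) :
    dist !₂[a, b] !₂[c, d] = √((a - c) ^ 2 + (b - d) ^ 2) := by
  simp [EuclideanSpace.dist_eq, Fin.sum_univ_two, Real.dist_eq, sq_abs]

theorem mul_div_lt_sqrt_sq_add_one {M a b : ℝ} (hM : 1 ≤ M) (ha₀ : 0 ≤ a) (ha : a ≤ M ^ 2)
    (hb : 0 ≤ b) : M / (3 * M ^ 4 + b) * (3 * M ^ 4 + a) < √(M ^ 2 + 1) := by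
  calc M / (3 * M ^ 4 + b) * (3 * M ^ 4 + a) ≤ M / (3 * M ^ 4) * (3 * M ^ 4 + M ^ 2) := by
        gcongr; linarith
    _ = M + 1 / (3 * M) := by field_simp
    _ < √(M ^ 2 + 1) := by
        rw [Real.lt_sqrt (by positivity)]
        field_simp
        nlinarith

theorem one_le_sq_natCast_sub {a b : ℕ} (h : a ≠ b) : (1 : ℝ) ≤ ((a : ℝ) - b) ^ 2 := by
  have : (1 : ℤ) ≤ ((a : ℤ) - b) ^ 2 := by
    nlinarith [Int.one_le_abs (sub_ne_zero.2 (Int.ofNat_inj.not.2 h)), sq_abs ((a : ℤ) - b)]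
  exact_mod_cast this

namespace QuadraticExample

variable (m : ℕ)

noncomputable def scale (i : Fin m) : ℝ := 3 * m ^ 4 + (i : ℕ) * m

noncomputable def site (p : Fin m × Fin 3) : EuclideanSpace ℝ (Fin 2) :=
  if p.2 = 0 then !₂[0, (p.1 : ℕ)] else !₂[scale m p.1, -1]

noncomputable def weight (p : Fin m × Fin 3) : ℝ :=
  if p.2 = 0 then 1 else m / scale m p.1

def triple (i j : Fin m) : Finset (Fin m × Fin 3) := {(j, 0), (i, 1), (i, 2)}

noncomputable def witness (i j : Fin m) : EuclideanSpace ℝ (Fin 2) := !₂[scale m i, (j : ℕ)]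

variable {m}

theorem one_le_of_fin (i : Fin m) : (1 : ℝ) ≤ m := by
  exact_mod_cast i.pos

theorem scale_pos (i : Fin m) : 0 < scale m i := by
  have := one_le_of_fin i
  unfold scale
  positivity

theorem weight_pos (p : Fin m × Fin 3) : 0 < weight m p := by
  have := one_le_of_fin p.1
  have := scale_pos p.1
  unfold weight
  split_ifs <;> positivity

theorem weight_of_ne_zero (k : Fin m) {c : Fin 3} (hc : c ≠ 0) :
    weight m (k, c) = m / scale m k :=
  if_neg hc

theorem dist_site_zero_witness (i j k : Fin m) :
    dist (site m (k, 0)) (witness m i j) = √(scale m i ^ 2 + (((k : ℕ) : ℝ) - (j : ℕ)) ^ 2) := by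
  simp [site, witness, EuclideanSpace.dist_vec2]

theorem dist_site_witness_of_ne_zero (i j k : Fin m) {c : Fin 3} (hc : c ≠ 0) :
    dist (site m (k, c)) (witness m i j) =
      √((scale m k - scale m i) ^ 2 + ((j : ℕ) + 1) ^ 2) := by
  simp only [site, hc, if_false, witness, EuclideanSpace.dist_vec2]
  ring_nf

theorem dist_site_witness_le_of_mem_triple {i j : Fin m} {t : Fin m × Fin 3}
    (ht : t ∈ triple m i j) : dist (site m t) (witness m i j) ≤ weight m t * scale m i := by
  simp only [triple, mem_insert, mem_singleton] at ht
  rcases ht with rfl | rfl | rfl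
  · simp [dist_site_zero_witness, weight, (scale_pos i).le]
  all_goals
    rw [dist_site_witness_of_ne_zero _ _ _ (by decide), weight_of_ne_zero _ (by decide),
      div_mul_cancel₀ _ (scale_pos i).ne', sub_self, zero_pow two_ne_zero, zero_add,
      Real.sqrt_sq (by positivity)]
    exact_mod_cast j.isLt

theorem lt_dist_site_witness_of_notMem_triple {i j : Fin m} {t : Fin m × Fin 3}
    (ht : t ∉ triple m i j) : weight m t * scale m i < dist (site m t) (witness m i j) := by
  obtain ⟨k, c⟩ := t
  simp only [triple, mem_insert, mem_singleton, Prod.mk.injEq, not_or] at ht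
  by_cases hc : c = 0
  · subst hc
    have hkj : (k : ℕ) ≠ j := fun h => ht.1 ⟨Fin.ext h, rfl⟩
    rw [dist_site_zero_witness, weight, if_pos rfl, one_mul, Real.lt_sqrt (scale_pos i).le]
    linarith [one_le_sq_natCast_sub hkj]
  · have hki : (k : ℕ) ≠ i := fun h => by have := Fin.ext h; omega
    have hM := one_le_of_fin i
    have hi : ((i : ℕ) : ℝ) * m ≤ (m : ℝ) ^ 2 := by
      rw [sq]; gcongr; exact_mod_cast i.isLt.le
    have hdiff : (scale m k - scale m i) ^ 2 = (((k : ℕ) : ℝ) - (i : ℕ)) ^ 2 * m ^ 2 := by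
      unfold scale; ring
    rw [dist_site_witness_of_ne_zero _ _ _ hc, weight_of_ne_zero _ hc, hdiff]
    calc _ < √((m : ℝ) ^ 2 + 1) :=
          mul_div_lt_sqrt_sq_add_one hM (by positivity) hi (by positivity)
      _ ≤ _ := Real.sqrt_le_sqrt (add_le_add
          (le_mul_of_one_le_left (sq_nonneg _) (one_le_sq_natCast_sub hki))
          (by nlinarith [(j : ℕ).cast_nonneg (α := ℝ)]))

theorem weightedRegionNonempty_triple (i j : Fin m) :
    WeightedRegionNonempty (site m) (weight m) (triple m i j) :=
  ⟨witness m i j, scale m i, fun _ => dist_site_witness_le_of_mem_triple,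
    fun _ => lt_dist_site_witness_of_notMem_triple⟩

theorem card_triple (i j : Fin m) : (triple m i j).card = 3 := by
  simp [triple]

theorem triple_injective : Function.Injective fun p : Fin m × Fin m => triple m p.1 p.2 := by
  rintro ⟨i, j⟩ ⟨i', j'⟩ (h : triple m i j = triple m i' j')
  have hj : (j, (0 : Fin 3)) ∈ triple m i' j' := h ▸ by simp [triple]
  have hi : (i, (1 : Fin 3)) ∈ triple m i' j' := h ▸ by simp [triple]
  simp_all [triple]

theorem sq_le_ncard_nonemptyOrderRegions (m : ℕ) :
    m ^ 2 ≤ (nonemptyOrderRegions 3 (site m) (weight m)).ncard := by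
  have := Set.ncard_le_ncard_of_injOn (s := Set.univ)
    (t := nonemptyOrderRegions 3 (site m) (weight m)) (fun p : Fin m × Fin m => triple m p.1 p.2)
    (fun p _ => ⟨card_triple p.1 p.2, weightedRegionNonempty_triple p.1 p.2⟩)
    triple_injective.injOn (Set.toFinite _)
  simpa [sq] using this

end QuadraticExample

open QuadraticExample in
/-- **Worst-case lower bound for weighted order-3 Voronoi diagrams in ℝ²
(Corollary 6.4).**  In the worst case the multiplicatively weighted order-`3`
Voronoi diagram of `n` sites in `2`-dimensional Euclidean space has `Ω(n²)`
non-empty regions: there is a constant `c > 0` such that for infinitely many `n`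
there are `n` sites in `ℝ²` with positive weights (normalized weights
`ω i = √(w i)`) whose weighted order-`3` Voronoi diagram has at least `c·n²`
non-empty regions. -/
theorem weighted_order_three_voronoi_quadratic_lower_bound :
    ∃ c > (0 : ℝ), ∀ N : ℕ, ∃ n : ℕ, N ≤ n ∧
      ∃ (s : Fin n → EuclideanSpace ℝ (Fin 2)) (w : Fin n → ℝ),
        (∀ i, 0 < w i) ∧
        c * (n : ℝ) ^ 2 ≤
          ({A : Finset (Fin n) | A.card = 3 ∧
              ∃ (x : EuclideanSpace ℝ (Fin 2)) (r : ℝ),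
                (∀ i ∈ A, dist (s i) x ≤ Real.sqrt (w i) * r) ∧
                ∀ i ∉ A, Real.sqrt (w i) * r < dist (s i) x}.ncard : ℝ) := by
  refine ⟨1 / 9, by norm_num, fun N => ?_⟩
  let e : Fin N × Fin 3 ≃ Fin (N * 3) := finProdFinEquiv
  let ω := weight N ∘ e.symm
  have hω (t : Fin (N * 3)) : 0 < ω t := weight_pos _
  refine ⟨N * 3, by omega, site N ∘ e.symm, fun t => ω t ^ 2, fun t => pow_pos (hω t) 2, ?_⟩
  have sqrt_weight (t : Fin (N * 3)) : √(ω t ^ 2) = ω t := Real.sqrt_sq (hω t).le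
  simp only [sqrt_weight]
  change _ ≤ ((nonemptyOrderRegions 3 (site N ∘ e.symm) ω).ncard : ℝ)
  have key := (sq_le_ncard_nonemptyOrderRegions N).trans
    (ncard_nonemptyOrderRegions_le_comp_equiv 3 (site N) (weight N) e)
  calc 1 / 9 * ((N * 3 : ℕ) : ℝ) ^ 2 = (N ^ 2 : ℕ) := by push_cast; ring
    _ ≤ _ := by exact_mod_cast key
end

section
/- In the weighted geometric random k-SAT model on 𝕋^d with a 𝔭-norm and temperature T < 1, let c be a clause at any fixed position and let the n weighted variables have independent uniformly random positions. If x̄ ∈ Ω(W^{1/T}), then the expected sum of connection weights smaller than x̄ is O(x̄); i.e., E[ Σ_{v ∈ V} X(c,v) · 1{X(c,v) < x̄} ] ∈ O(x̄). -/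
/-
The connection weight of a variable of weight `w` exceeds `t` only within torus distance
`(w t^{-T})^{1/d}` of the clause, a set of volume at most `2^d w t^{-T}`. Since `T < 1`, this tail
bound is integrable at `0`, so the layer-cake formula gives
`E[X 1{X < x̄}] ≤ 2^d w x̄^{1-T} / (1 - T)`. Summing over the variables and using
`W ≤ (x̄ / c)^T` bounds the total by a constant times `x̄`.
-/

open Filter Finset MeasureTheory
open scoped ENNReal

instance : Fact ((0 : ℝ) < 1) := ⟨one_pos⟩

/-- The `d`-dimensional unit torus `𝕋^d = ℝ^d / ℤ^d`. -/
abbrev Torus (d : ℕ) := Fin d → AddCircle (1 : ℝ)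

/-- The `𝔭`-norm distance on the torus, for `𝔭 ∈ ℕ⁺ ∪ {∞}` (`𝔭 = ⊤` is the sup-norm);
`‖x i - y i‖` is the circular difference of the `i`-th coordinates. -/
noncomputable def torusDist (d : ℕ) (p : ℕ∞) (x y : Torus d) : ℝ :=
  if p = ⊤ then ⨆ i : Fin d, ‖x i - y i‖
  else (∑ i : Fin d, ‖x i - y i‖ ^ (p.toNat : ℝ)) ^ ((p.toNat : ℝ))⁻¹

/-- The connection weight `X(c, v) = (w_v / dist(c, v)^d)^{1/T}` between a clause at
position `c` and a variable of weight `w` at position `v`. -/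
noncomputable def connW (d : ℕ) (p : ℕ∞) (T : ℝ) (w : ℝ) (c v : Torus d) : ℝ≥0∞ :=
  (ENNReal.ofReal w / ENNReal.ofReal (torusDist d p c v) ^ (d : ℝ)) ^ (1 / T)

/-- Probability that a clause at position `c` draws the ordered tuple `v` of `k`
distinct variables, drawn sequentially without repetition with probabilities
proportional to the connection weights. -/
noncomputable def drawMass (d : ℕ) (p : ℕ∞) (T : ℝ) {n : ℕ} (k : ℕ) (w : Fin n → ℝ)
    (c : Torus d) (vp : Fin n → Torus d) (v : Fin k → Fin n) : ℝ≥0∞ :=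
  if Function.Injective v then
    ∏ j : Fin k,
      connW d p T (w (v j)) c (vp (v j)) /
        ((∑ u : Fin n, connW d p T (w u) c (vp u)) -
          ∑ l ∈ Finset.univ.filter (fun l : Fin k => l < j),
            connW d p T (w (v l)) c (vp (v l)))
  else 0

/-- The discrete measure with mass function `f`. -/
noncomputable def discMeasure {α : Type*} [MeasurableSpace α] (f : α → ℝ≥0∞) :
    Measure α :=
  Measure.sum fun a : α => f a • Measure.dirac a

/-- The tuple `v` of variables drawn by a clause at position `c` is *nice*: for each
`j`, the `j`-th drawn variable has the `j`-th highest connection weight, i.e. its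
connection weight is at least that of every variable not drawn before or at step `j`. -/
def Nice (d : ℕ) (p : ℕ∞) (T : ℝ) {n k : ℕ} (w : Fin n → ℝ)
    (c : Torus d) (vp : Fin n → Torus d) (v : Fin k → Fin n) : Prop :=
  ∀ j : Fin k, ∀ u : Fin n, (∀ l : Fin k, l ≤ j → v l ≠ u) →
    connW d p T (w u) c (vp u) ≤ connW d p T (w (v j)) c (vp (v j))

theorem lintegral_Ioc_ofReal_rpow_neg {s β : ℝ} (hs : s < 1) (hβ : 0 ≤ β) :
    ∫⁻ t in Set.Ioc 0 β, ENNReal.ofReal (t ^ (-s)) =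
      ENNReal.ofReal (β ^ (1 - s) / (1 - s)) := by
  have hint : IntegrableOn (fun t : ℝ => t ^ (-s)) (Set.Ioc 0 β) :=
    (intervalIntegrable_iff_integrableOn_Ioc_of_le hβ).1
      (intervalIntegral.intervalIntegrable_rpow' (by linarith))
  rw [← ofReal_integral_eq_lintegral_ofReal hint
      (ae_restrict_of_forall_mem measurableSet_Ioc fun t ht => Real.rpow_nonneg ht.1.le _),
    ← intervalIntegral.integral_of_le hβ, integral_rpow (Or.inl (by linarith)),
    Real.zero_rpow (by linarith), sub_zero, neg_add_eq_sub]

theorem Measurable.ite_lt_const {α : Type*} [MeasurableSpace α] {f : α → ℝ≥0∞}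
    (hf : Measurable f) (b : ℝ≥0∞) : Measurable fun x => if f x < b then f x else 0 :=
  hf.ite (hf measurableSet_Iio) measurable_const

theorem lintegral_ite_lt_le_of_meas_le_rpow_neg {α : Type*} [MeasurableSpace α]
    {μ : Measure α} {f : α → ℝ≥0∞} (hf : Measurable f) {K : ℝ≥0∞} {s : ℝ} (hs : s < 1)
    (htail : ∀ t : ℝ, 0 < t → μ {x | ENNReal.ofReal t ≤ f x} ≤ K * ENNReal.ofReal (t ^ (-s)))
    {β : ℝ} (hβ : 0 ≤ β) :
    ∫⁻ x, (if f x < ENNReal.ofReal β then f x else 0) ∂μ ≤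
      K * ENNReal.ofReal (β ^ (1 - s) / (1 - s)) := by
  set F : α → ℝ≥0∞ := fun x => if f x < ENNReal.ofReal β then f x else 0 with hF
  have hF_le : ∀ x, F x ≤ ENNReal.ofReal β := fun x => by
    simp only [hF]; split_ifs with h
    exacts [h.le, zero_le]
  have hF_le_f : ∀ x, F x ≤ f x := fun x => by
    simp only [hF]; split_ifs
    exacts [le_rfl, zero_le]
  have hF_top : ∀ x, F x ≠ ⊤ := fun x => ne_top_of_le_ne_top ENNReal.ofReal_ne_top (hF_le x)
  have hlevel : ∀ t ∈ Set.Ioi (0 : ℝ), μ {x | t < (F x).toReal} ≤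
      (Set.Ioc 0 β).indicator (fun t => K * ENNReal.ofReal (t ^ (-s))) t := by
    intro t ht
    by_cases htβ : t ≤ β
    · rw [Set.indicator_of_mem (show t ∈ Set.Ioc 0 β from ⟨ht, htβ⟩)]
      refine (measure_mono fun x hx => ?_).trans (htail t ht)
      exact (ENNReal.ofReal_le_of_le_toReal (le_of_lt hx)).trans (hF_le_f x)
    · suffices {x | t < (F x).toReal} = ∅ by simp [this]
      refine Set.eq_empty_of_forall_notMem fun x hx => htβ ?_
      exact (le_of_lt hx).trans (ENNReal.toReal_le_of_le_ofReal hβ (hF_le x))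
  calc ∫⁻ x, F x ∂μ = ∫⁻ x, ENNReal.ofReal (F x).toReal ∂μ := by
        simp only [ENNReal.ofReal_toReal (hF_top _)]
    _ = ∫⁻ t in Set.Ioi 0, μ {x | t < (F x).toReal} :=
        lintegral_eq_lintegral_meas_lt μ (ae_of_all _ fun _ => ENNReal.toReal_nonneg)
          (hf.ite_lt_const _).ennreal_toReal.aemeasurable
    _ ≤ ∫⁻ t in Set.Ioi 0,
          (Set.Ioc 0 β).indicator (fun t => K * ENNReal.ofReal (t ^ (-s))) t :=
        setLIntegral_mono' measurableSet_Ioi hlevel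
    _ = K * ENNReal.ofReal (β ^ (1 - s) / (1 - s)) := by
        rw [setLIntegral_indicator measurableSet_Ioc,
          Set.inter_eq_left.2 Set.Ioc_subset_Ioi_self, lintegral_const_mul _ (by fun_prop),
          lintegral_Ioc_ofReal_rpow_neg hs hβ]

theorem lintegral_pi_sum_comp_eval {ι α : Type*} [Fintype ι] [MeasurableSpace α]
    {μ : Measure α} [IsProbabilityMeasure μ] {f : ι → α → ℝ≥0∞} (hf : ∀ i, Measurable (f i)) :
    ∫⁻ x : ι → α, ∑ i, f i (x i) ∂Measure.pi (fun _ => μ) = ∑ i, ∫⁻ a, f i a ∂μ := by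
  refine (lintegral_finsetSum _ fun i _ => (hf i).comp (measurable_pi_apply i)).trans ?_
  exact Finset.sum_congr rfl fun i _ => (measurePreserving_eval _ i).lintegral_comp (hf i)

theorem mul_rpow_one_sub_le_of_mul_rpow_inv_le {W x c T : ℝ} (hW : 0 ≤ W) (hc : 0 < c)
    (hT : 0 < T) (h : c * W ^ (1 / T) ≤ x) : W * x ^ (1 - T) ≤ c ^ (-T) * x := by
  have hx : 0 ≤ x := (by positivity : 0 ≤ c * W ^ (1 / T)).trans h
  have hWx : W ≤ c ^ (-T) * x ^ T :=
    calc W = (W ^ (1 / T)) ^ T := by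
          rw [← Real.rpow_mul hW, one_div_mul_cancel hT.ne', Real.rpow_one]
      _ ≤ (x / c) ^ T := by gcongr; rwa [le_div_iff₀ hc, mul_comm]
      _ = c ^ (-T) * x ^ T := by
          rw [Real.div_rpow hx hc.le, Real.rpow_neg hc.le, div_eq_inv_mul]
  calc W * x ^ (1 - T) ≤ c ^ (-T) * x ^ T * x ^ (1 - T) := by gcongr
    _ = c ^ (-T) * x := by
        rw [mul_assoc, ← Real.rpow_add' hx (by norm_num), add_sub_cancel, Real.rpow_one]

theorem norm_sub_le_torusDist {d : ℕ} (p : ℕ∞) (x y : Torus d) (i : Fin d) :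
    ‖x i - y i‖ ≤ torusDist d p x y := by
  unfold torusDist
  split
  · exact le_ciSup (f := fun j => ‖x j - y j‖) (Set.finite_range _).bddAbove i
  · rcases Nat.eq_zero_or_pos p.toNat with hp | hp
    -- exponent `0` (`𝔭 = 0`): the "distance" is `1`, while circular differences are `≤ 1/2`
    · simpa [hp] using (AddCircle.norm_le_half_period (1 : ℝ) one_ne_zero).trans (by norm_num)
    · have hp' : (p.toNat : ℝ) ≠ 0 := by positivity
      calc ‖x i - y i‖ = (‖x i - y i‖ ^ (p.toNat : ℝ)) ^ (p.toNat : ℝ)⁻¹ :=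
            (Real.rpow_rpow_inv (norm_nonneg _) hp').symm
        _ ≤ (∑ j : Fin d, ‖x j - y j‖ ^ (p.toNat : ℝ)) ^ (p.toNat : ℝ)⁻¹ := by
            gcongr
            exact Finset.single_le_sum (f := fun j => ‖x j - y j‖ ^ (p.toNat : ℝ))
              (fun j _ => by positivity) (Finset.mem_univ i)

theorem measurable_torusDist {d : ℕ} (p : ℕ∞) (c : Torus d) :
    Measurable (torusDist d p c) := by
  unfold torusDist
  split <;> fun_prop

theorem measurable_connW {d : ℕ} (p : ℕ∞) (T w : ℝ) (c : Torus d) :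
    Measurable (connW d p T w c) := by
  have := measurable_torusDist p c
  unfold connW
  fun_prop

theorem volume_setOf_torusDist_le {d : ℕ} (p : ℕ∞) (c : Torus d) (r : ℝ) :
    volume {x | torusDist d p c x ≤ r} ≤ ENNReal.ofReal (2 * r) ^ d := by
  have hsub : {x | torusDist d p c x ≤ r} ⊆ Set.univ.pi fun i => Metric.closedBall (c i) r :=
    fun x hx i _ => by
      rw [Metric.mem_closedBall, dist_eq_norm, norm_sub_rev]
      exact (norm_sub_le_torusDist p c x i).trans hx
  calc volume {x | torusDist d p c x ≤ r}
      ≤ ∏ i, volume (Metric.closedBall (c i) r) :=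
        (measure_mono hsub).trans_eq (volume_pi_pi _)
    _ ≤ ∏ _i : Fin d, ENNReal.ofReal (2 * r) := by
        gcongr with i
        rw [AddCircle.volume_closedBall]
        exact ENNReal.ofReal_le_ofReal (min_le_right _ _)
    _ = ENNReal.ofReal (2 * r) ^ d := by simp

theorem torusDist_le_of_ofReal_le_connW {d : ℕ} (hd : 0 < d) (p : ℕ∞) {T w t : ℝ}
    (hT : 0 < T) (hw : 0 ≤ w) (ht : 0 < t) {c x : Torus d}
    (h : ENNReal.ofReal t ≤ connW d p T w c x) :
    torusDist d p c x ≤ (w * t ^ (-T)) ^ (d : ℝ)⁻¹ := by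
  by_contra! hlt
  set D := torusDist d p c x
  have hD : 0 < D := (Real.rpow_nonneg (by positivity) _).trans_lt hlt
  have hDd : w * t ^ (-T) < D ^ (d : ℝ) := by
    simpa [Real.rpow_inv_rpow (by positivity : 0 ≤ w * t ^ (-T)) (by positivity : (d : ℝ) ≠ 0)]
      using Real.rpow_lt_rpow (by positivity) hlt (by positivity : (0 : ℝ) < d)
  have hsmall : (w / D ^ (d : ℝ)) ^ (1 / T) < t := by
    have : w / D ^ (d : ℝ) < t ^ T := by
      rw [div_lt_iff₀ (by positivity)]
      rw [Real.rpow_neg ht.le, ← div_eq_mul_inv, div_lt_iff₀ (by positivity)] at hDd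
      linarith
    calc (w / D ^ (d : ℝ)) ^ (1 / T) < (t ^ T) ^ (1 / T) := by gcongr
      _ = t := by rw [← Real.rpow_mul ht.le, mul_one_div_cancel hT.ne', Real.rpow_one]
  have hconn : connW d p T w c x = ENNReal.ofReal ((w / D ^ (d : ℝ)) ^ (1 / T)) := by
    rw [connW, ENNReal.ofReal_rpow_of_nonneg hD.le (by positivity),
      ← ENNReal.ofReal_div_of_pos (by positivity),
      ENNReal.ofReal_rpow_of_nonneg (by positivity) (by positivity)]
  rw [hconn, ENNReal.ofReal_le_ofReal_iff (by positivity)] at h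
  linarith

theorem volume_setOf_ofReal_le_connW {d : ℕ} (hd : 0 < d) (p : ℕ∞) {T w t : ℝ}
    (hT : 0 < T) (hw : 0 ≤ w) (ht : 0 < t) (c : Torus d) :
    volume {x | ENNReal.ofReal t ≤ connW d p T w c x} ≤
      ENNReal.ofReal (2 ^ d * w) * ENNReal.ofReal (t ^ (-T)) := by
  have hρ : ((w * t ^ (-T)) ^ (d : ℝ)⁻¹) ^ d = w * t ^ (-T) :=
    Real.rpow_inv_natCast_pow (by positivity) hd.ne'
  calc volume {x | ENNReal.ofReal t ≤ connW d p T w c x}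
      ≤ volume {x | torusDist d p c x ≤ (w * t ^ (-T)) ^ (d : ℝ)⁻¹} :=
        measure_mono fun x => torusDist_le_of_ofReal_le_connW hd p hT hw ht
    _ ≤ ENNReal.ofReal (2 * (w * t ^ (-T)) ^ (d : ℝ)⁻¹) ^ d := volume_setOf_torusDist_le p c _
    _ = ENNReal.ofReal (2 ^ d * w) * ENNReal.ofReal (t ^ (-T)) := by
        rw [← ENNReal.ofReal_pow (by positivity), mul_pow, hρ, ← mul_assoc,
          ENNReal.ofReal_mul (by positivity)]

instance AddCircle.isProbabilityMeasure_volume_one :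
    IsProbabilityMeasure (volume : Measure (AddCircle (1 : ℝ))) :=
  ⟨UnitAddCircle.measure_univ⟩

theorem lintegral_ite_connW_lt_le {d : ℕ} (hd : 0 < d) (p : ℕ∞) {T w β : ℝ}
    (hT0 : 0 < T) (hT1 : T < 1) (hw : 0 ≤ w) (hβ : 0 ≤ β) (c : Torus d) :
    ∫⁻ x, (if connW d p T w c x < ENNReal.ofReal β then connW d p T w c x else 0) ≤
      ENNReal.ofReal (2 ^ d * w) * ENNReal.ofReal (β ^ (1 - T) / (1 - T)) :=
  lintegral_ite_lt_le_of_meas_le_rpow_neg (measurable_connW p T w c) hT1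
    (fun _ ht => volume_setOf_ofReal_le_connW hd p hT0 hw ht c) hβ

open scoped Classical in
/-- **Expected sum of small connection weights (Lemma 7.1).**
In the weighted geometric random `k`-SAT model on `𝕋^d` with a `𝔭`-norm and
temperature `T < 1`, let `c` be a clause at any position and let the `n` weighted
variables have independent uniformly random positions.  If `x̄ ∈ Ω(W^{1/T})`, then
the expected sum of the connection weights smaller than `x̄` is `O(x̄)`. -/
theorem expected_sum_of_small_connection_weights
    (d : ℕ) (hd : 0 < d) (p : ℕ∞) (T : ℝ) (hT0 : 0 < T) (hT1 : T < 1)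
    (w : (n : ℕ) → Fin n → ℝ) (hw : ∀ n v, 1 ≤ w n v)
    (cpos : (n : ℕ) → Torus d)
    (xb : ℕ → ℝ)
    (hxb : ∃ c > (0 : ℝ), ∀ᶠ n : ℕ in atTop,
      c * (∑ v : Fin n, w n v) ^ (1 / T) ≤ xb n) :
    ∃ C > (0 : ℝ), ∀ᶠ n : ℕ in atTop,
      (∫⁻ vp : Fin n → Torus d,
          ∑ v : Fin n,
            if connW d p T (w n v) (cpos n) (vp v) < ENNReal.ofReal (xb n)
            then connW d p T (w n v) (cpos n) (vp v) else 0) ≤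
        ENNReal.ofReal (C * xb n) := by
  obtain ⟨c₀, hc₀, hev⟩ := hxb
  have hT1' : 0 < 1 - T := sub_pos.2 hT1
  refine ⟨2 ^ d * c₀ ^ (-T) / (1 - T), by positivity, ?_⟩
  filter_upwards [hev] with n hn
  have hw₀ : ∀ v, 0 ≤ w n v := fun v => zero_le_one.trans (hw n v)
  have hW₀ : 0 ≤ ∑ v, w n v := Finset.sum_nonneg fun v _ => hw₀ v
  have hxb₀ : 0 ≤ xb n := (by positivity : 0 ≤ c₀ * (∑ v, w n v) ^ (1 / T)).trans hn
  refine (lintegral_pi_sum_comp_eval (μ := (volume : Measure (Torus d)))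
    fun v => (measurable_connW p T (w n v) (cpos n)).ite_lt_const _).trans_le ?_
  calc _ ≤ ∑ v, ENNReal.ofReal (2 ^ d * w n v) * ENNReal.ofReal (xb n ^ (1 - T) / (1 - T)) :=
        Finset.sum_le_sum fun v _ => lintegral_ite_connW_lt_le hd p hT0 hT1 (hw₀ v) hxb₀ _
    _ = ENNReal.ofReal (2 ^ d / (1 - T) * ((∑ v, w n v) * xb n ^ (1 - T))) := by
        rw [← Finset.sum_mul,
          ← ENNReal.ofReal_sum_of_nonneg fun v _ => mul_nonneg (by positivity) (hw₀ v),
          ← Finset.mul_sum, ← ENNReal.ofReal_mul (by positivity)]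
        ring_nf
    _ ≤ ENNReal.ofReal (2 ^ d / (1 - T) * (c₀ ^ (-T) * xb n)) := by
        gcongr ENNReal.ofReal (2 ^ d / (1 - T) * ?_)
        exact mul_rpow_one_sub_le_of_mul_rpow_inv_le hW₀ hc₀ hT0 hn
    _ = ENNReal.ofReal (2 ^ d * c₀ ^ (-T) / (1 - T) * xb n) := by ring_nf
end
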